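/- arXiv:1606.04194 — 2 statements merged into one kernel-verified Lean document; each statement's English description precedes it below -/
import Mathlib

section
/- For all ordinals α, β: the set H_α(β) is closed under the natural (Hessenberg) sum, i.e. γ, δ ∈ H_α(β) implies γ # δ ∈ H_α(β); and it is closed under the constructors in the reverse direction: γ # δ ∈ H_α(β) implies γ ∈ H_α(β) and δ ∈ H_α(β); ω^γ ∈ H_α(β) implies γ ∈ H_α(β); and Ω_γ ∈ H_α(β) implies γ ∈ H_α(β). -/
open Ordinal Set
universe u

/-- Natural (Hessenberg) sum, as `Ordinal.nadd` was defined in Mathlib (removed since). -/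
noncomputable def Ordinal.nadd : Ordinal.{u} → Ordinal.{u} → Ordinal.{u}
  | a, b =>
    max (⨆ x : Set.Iio a, Order.succ (Ordinal.nadd x.1 b))
      (⨆ x : Set.Iio b, Order.succ (Ordinal.nadd a x.1))
termination_by a b => (a, b)
decreasing_by
  · exact Prod.Lex.left _ _ x.2
  · exact Prod.Lex.right _ x.2

infixl:65 " ♯ " => Ordinal.nadd

noncomputable section

/-- A cardinal is weakly inaccessible: uncountable, regular, and a limit cardinal. -/
def WeaklyInaccessible (c : Cardinal) : Prop :=
  Cardinal.aleph0 < c ∧ c.IsRegular ∧ ∀ x < c, Order.succ x < c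

/-- `I` is (the initial ordinal of) the least weakly inaccessible cardinal. -/
def I : Ordinal := (sInf {c : Cardinal | WeaklyInaccessible c}).ord

/-- `Om α` is `Ω_α`: `0` for `α = 0` and the initial ordinal of `ℵ_α` otherwise. -/
def Om (α : Ordinal) : Ordinal := if α = 0 then 0 else (Cardinal.aleph α).ord

/-- `R = {Ω_{μ+1} : μ < I} ∪ {I}`. -/
def R : Set Ordinal := {o | (∃ μ < I, o = Om (μ + 1)) ∨ o = I}

/-- Given the family of hulls at earlier stages, the collapse `ψ_σ`. -/
def psiOf (F : Set Ordinal → Set Ordinal) (σ : Ordinal) : Ordinal :=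
  sInf ({β | β < σ ∧ σ ∈ F (Set.Iio β) ∧ F (Set.Iio β) ∩ Set.Iio σ ⊆ Set.Iio β} ∪ {σ})

instance : WellFoundedRelation Ordinal := ⟨(· < ·), Ordinal.lt_wf⟩

/-- `H α X` is the least set of ordinals containing `X ∪ {0, I}` and closed under
ordinal addition, `β ↦ ω^β`, `β ↦ Ω_β`, and `(σ, β) ↦ ψ_σ β` for `σ ∈ R` and `β < α`. -/
def H (α : Ordinal) (X : Set Ordinal) : Set Ordinal :=
  ⋂₀ {Y : Set Ordinal | X ∪ {0, I} ⊆ Y ∧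
      (∀ γ ∈ Y, ∀ δ ∈ Y, γ + δ ∈ Y) ∧
      (∀ γ ∈ Y, Ordinal.omega0 ^ γ ∈ Y) ∧
      (∀ γ ∈ Y, Om γ ∈ Y) ∧
      (∀ σ ∈ R, ∀ β ∈ Y, β < α → σ ∈ Y → psiOf (H β) σ ∈ Y)}
termination_by α
decreasing_by assumption

/-- The collapsing function `ψ_σ α`. -/
def psi (σ α : Ordinal) : Ordinal := psiOf (H α) σ

/-- The relation `δ₀ ≪ δ₁ {η}`. -/
def llr (η δ₀ δ₁ : Ordinal) : Prop :=
  δ₀ < δ₁ ∧ ∀ σ ∈ R, ∀ α : Ordinal,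
    δ₁ ∈ H α (Set.Iio (psi σ α)) → η ∈ H α (Set.Iio (psi σ α)) → δ₀ ∈ H α (Set.Iio (psi σ α))

/-!
Natural sum adds Cantor normal forms (base `ω`) coefficientwise, so the exponents of `γ ♯ δ` are
those of `γ` together with those of `δ`, while the exponents of `γ + δ` are among them. Since
`H α X` is closed under `+` and `ω ^ ·`, an ordinal whose exponents lie in `H α X` lies in
`H α X`. All four claims therefore follow once `H α X` (for `X` downward closed) is shown to be
closed under taking exponents and under `Ω_γ ↦ γ`. This is an induction over the generation of
`H α X`. The only nontrivial case is a collapse `p = ψ_σ β < σ`: the defining property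
`H_β(p) ∩ σ ⊆ p` puts `ω ^ (x + 1)` below `p` for every `x < p`, so `p` is an epsilon number
whose only exponent is `p` itself, and it rules out `p = Ω_g` with `g < p`.
-/

namespace Ordinal

theorem lt_nadd_iff {a b c : Ordinal} :
    a < b ♯ c ↔ (∃ b' < b, a ≤ b' ♯ c) ∨ ∃ c' < c, a ≤ b ♯ c' := by
  rw [nadd, lt_max_iff, Ordinal.lt_iSup_iff, Ordinal.lt_iSup_iff]
  simp only [Order.lt_succ_iff, Subtype.exists, Set.mem_Iio, exists_prop]

theorem nadd_le_iff {a b c : Ordinal} :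
    b ♯ c ≤ a ↔ (∀ b' < b, b' ♯ c < a) ∧ ∀ c' < c, b ♯ c' < a := by
  rw [← not_lt, lt_nadd_iff]
  simp only [not_or, not_exists, not_and, not_le]

theorem nadd_lt_nadd_left {b c : Ordinal} (h : b < c) (a : Ordinal) : a ♯ b < a ♯ c :=
  lt_nadd_iff.2 (Or.inr ⟨b, h, le_rfl⟩)

theorem nadd_lt_nadd_right {b c : Ordinal} (h : b < c) (a : Ordinal) : b ♯ a < c ♯ a :=
  lt_nadd_iff.2 (Or.inl ⟨b, h, le_rfl⟩)

theorem nadd_le_nadd_left {b c : Ordinal} (h : b ≤ c) (a : Ordinal) : a ♯ b ≤ a ♯ c := by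
  rcases h.lt_or_eq with h | rfl
  exacts [(nadd_lt_nadd_left h a).le, le_rfl]

theorem nadd_le_nadd_right {b c : Ordinal} (h : b ≤ c) (a : Ordinal) : b ♯ a ≤ c ♯ a := by
  rcases h.lt_or_eq with h | rfl
  exacts [(nadd_lt_nadd_right h a).le, le_rfl]

theorem nadd_comm (a b : Ordinal) : a ♯ b = b ♯ a := by
  induction a using WellFoundedLT.induction generalizing b with
  | ind a IHa =>
  induction b using WellFoundedLT.induction with
  | ind b IHb =>
  refine (nadd_le_iff.2 ⟨fun a' ha' => ?_, fun b' hb' => ?_⟩).antisymm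
    (nadd_le_iff.2 ⟨fun b' hb' => ?_, fun a' ha' => ?_⟩)
  · rw [IHa a' ha']; exact nadd_lt_nadd_left ha' b
  · rw [IHb b' hb']; exact nadd_lt_nadd_right hb' a
  · rw [← IHb b' hb']; exact nadd_lt_nadd_left hb' a
  · rw [← IHa a' ha']; exact nadd_lt_nadd_right ha' b

@[simp]
theorem nadd_zero (a : Ordinal) : a ♯ 0 = a := by
  induction a using WellFoundedLT.induction with
  | ind a IH =>
  refine (nadd_le_iff.2 ⟨fun a' ha' => ?_, fun c hc => (not_lt_zero hc).elim⟩).antisymm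
    (le_of_forall_lt fun a' ha' => ?_)
  · rwa [IH a' ha']
  · simpa [IH a' ha'] using nadd_lt_nadd_right ha' 0

@[simp]
theorem zero_nadd (a : Ordinal) : 0 ♯ a = a := by
  rw [nadd_comm, nadd_zero]

theorem add_le_nadd (a b : Ordinal) : a + b ≤ a ♯ b := by
  induction b using WellFoundedLT.induction with
  | ind b IH =>
  rcases eq_or_ne b 0 with rfl | hb
  · simp
  refine le_of_forall_lt fun z hz => ?_
  obtain ⟨d, hd, hzd⟩ := (lt_add_iff hb).1 hz
  exact hzd.trans_lt ((IH d hd).trans_lt (nadd_lt_nadd_left hd a))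

theorem le_self_nadd (a b : Ordinal) : a ≤ a ♯ b :=
  le_self_add.trans (add_le_nadd a b)

theorem le_nadd_self (a b : Ordinal) : b ≤ a ♯ b :=
  le_add_self.trans (add_le_nadd a b)

theorem nadd_assoc_le (a b c : Ordinal) : a ♯ b ♯ c ≤ a ♯ (b ♯ c) := by
  induction a using WellFoundedLT.induction generalizing b c with
  | ind a IHa =>
  induction b using WellFoundedLT.induction generalizing c with
  | ind b IHb =>
  induction c using WellFoundedLT.induction with
  | ind c IHc =>
  refine nadd_le_iff.2 ⟨fun x hx => ?_, fun c' hc' => ?_⟩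
  · rcases lt_nadd_iff.1 hx with ⟨a', ha', hx⟩ | ⟨b', hb', hx⟩
    · exact (nadd_le_nadd_right hx c).trans_lt
        ((IHa a' ha' b c).trans_lt (nadd_lt_nadd_right ha' _))
    · exact (nadd_le_nadd_right hx c).trans_lt
        ((IHb b' hb' c).trans_lt (nadd_lt_nadd_left (nadd_lt_nadd_right hb' c) a))
  · exact (IHc c' hc').trans_lt (nadd_lt_nadd_left (nadd_lt_nadd_left hc' b) a)

theorem nadd_assoc (a b c : Ordinal) : a ♯ b ♯ c = a ♯ (b ♯ c) := by
  refine (nadd_assoc_le a b c).antisymm ?_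
  rw [nadd_comm a (b ♯ c), nadd_comm b c, nadd_comm (a ♯ b) c, nadd_comm a b]
  exact nadd_assoc_le c b a

theorem nadd_nadd_nadd_comm (a b c d : Ordinal) : a ♯ b ♯ (c ♯ d) = a ♯ c ♯ (b ♯ d) := by
  rw [nadd_assoc, ← nadd_assoc b c d, nadd_comm b c, nadd_assoc c b d, ← nadd_assoc a c]

section Principal

variable {p : Ordinal}

theorem exists_eq_mul_add_of_lt_mul {x m : Ordinal} (h : x < p * m) :
    ∃ k < m, ∃ r < p, x = p * k + r := by
  have hp : p ≠ 0 := by rintro rfl; simp at h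
  exact ⟨x / p, (lt_mul_iff_div_lt hp).1 h, x % p, mod_lt x hp, (div_add_mod x p).symm⟩

theorem exists_nat_eq_mul_add_of_lt_mul_omega0 {x : Ordinal} (h : x < p * ω) :
    ∃ m : ℕ, ∃ r < p, x = p * m + r := by
  obtain ⟨k, hk, r, hr, rfl⟩ := exists_eq_mul_add_of_lt_mul h
  obtain ⟨m, rfl⟩ := lt_omega0.1 hk
  exact ⟨m, r, hr, rfl⟩

theorem mul_nadd_of_lt (hp : IsPrincipal (· ♯ ·) p) (m : Ordinal) {a : Ordinal}
    (ha : a < p) : p * m ♯ a = p * m + a := by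
  induction m using WellFoundedLT.induction generalizing a with
  | ind m IHm =>
  induction a using WellFoundedLT.induction with
  | ind a IHa =>
  refine (nadd_le_iff.2 ⟨fun x hx => ?_, fun a' ha' => ?_⟩).antisymm (add_le_nadd _ _)
  · obtain ⟨k, hk, r, hr, rfl⟩ := exists_eq_mul_add_of_lt_mul hx
    calc (p * k + r) ♯ a = p * k + (r ♯ a) := by
          rw [← IHm k hk hr, nadd_assoc, IHm k hk (hp hr ha)]
      _ < p * k + p := by gcongr; exact hp hr ha
      _ = p * (k + 1) := (mul_add_one _ _).symm
      _ ≤ p * m + a := by grw [Order.add_one_le_of_lt hk]; exact le_self_add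
  · rw [IHa a' ha' (ha'.trans ha)]
    gcongr

theorem mul_nadd_self (hp : IsPrincipal (· ♯ ·) p) (m : Ordinal) : p * m ♯ p = p * (m + 1) := by
  induction m using WellFoundedLT.induction with
  | ind m IH =>
  refine (nadd_le_iff.2 ⟨fun x hx => ?_, fun a ha => ?_⟩).antisymm
    (mul_add_one p m ▸ add_le_nadd _ _)
  · obtain ⟨k, hk, r, hr, rfl⟩ := exists_eq_mul_add_of_lt_mul hx
    calc (p * k + r) ♯ p = p * (k + 1) + r := by
          rw [← mul_nadd_of_lt hp k hr, nadd_assoc, nadd_comm r, ← nadd_assoc, IH k hk,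
            mul_nadd_of_lt hp _ hr]
      _ < p * (k + 1) + p := by gcongr
      _ = p * (k + 1 + 1) := (mul_add_one _ _).symm
      _ ≤ p * (m + 1) := by grw [Order.add_one_le_of_lt hk]
  · rw [mul_nadd_of_lt hp m ha, mul_add_one]
    gcongr

theorem mul_nadd_mul_natCast (hp : IsPrincipal (· ♯ ·) p) (m : Ordinal) (n : ℕ) :
    p * m ♯ p * n = p * (m + n) := by
  induction n with
  | zero => simp
  | succ n IH =>
    rw [Nat.cast_succ, ← mul_nadd_self hp, ← nadd_assoc, IH, mul_nadd_self hp, add_assoc]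

theorem mul_nadd_of_lt_mul_omega0 (hp : IsPrincipal (· ♯ ·) p) (m : Ordinal) {y : Ordinal}
    (hy : y < p * ω) : p * m ♯ y = p * m + y := by
  obtain ⟨n, r, hr, rfl⟩ := exists_nat_eq_mul_add_of_lt_mul_omega0 hy
  calc p * m ♯ (p * n + r) = p * m ♯ p * n ♯ r := by rw [nadd_assoc, mul_nadd_of_lt hp n hr]
    _ = p * (m + n) + r := by rw [mul_nadd_mul_natCast hp, mul_nadd_of_lt hp _ hr]
    _ = p * m + (p * n + r) := by rw [mul_add, add_assoc]

theorem mul_add_nadd_mul_add (hp : IsPrincipal (· ♯ ·) p) (m : Ordinal) (n : ℕ)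
    {a b : Ordinal} (ha : a < p) (hb : b < p) :
    (p * m + a) ♯ (p * n + b) = p * (m + n) + (a ♯ b) := by
  rw [← mul_nadd_of_lt hp m ha, ← mul_nadd_of_lt hp n hb, nadd_nadd_nadd_comm,
    mul_nadd_mul_natCast hp, mul_nadd_of_lt hp _ (hp ha hb)]

end Principal

theorem exists_nat_lt_omega0_opow_mul {x d : Ordinal} (hx : log ω x ≤ d) :
    ∃ m : ℕ, x < ω ^ d * m := by
  have h : x < ω ^ d * ω := by
    rw [← opow_succ]
    exact (lt_opow_succ_log_self one_lt_omega0 x).trans_le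
      (opow_le_opow_right omega0_pos (Order.succ_le_succ hx))
  obtain ⟨c, hc, hxc⟩ := (lt_mul_iff_of_isSuccLimit isSuccLimit_omega0).1 h
  obtain ⟨m, rfl⟩ := lt_omega0.1 hc
  exact ⟨m, hxc⟩

theorem isPrincipal_nadd_omega0_opow (e : Ordinal) : IsPrincipal (· ♯ ·) (ω ^ e) := by
  induction e using WellFoundedLT.induction with
  | ind e IH =>
  intro a b ha hb
  rcases eq_or_ne a 0 with rfl | ha0
  · simpa
  rcases eq_or_ne b 0 with rfl | hb0
  · simpa
  set d := max (log ω a) (log ω b)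
  have hde : d < e := max_lt ((lt_opow_iff_log_lt one_lt_omega0 ha0).1 ha)
    ((lt_opow_iff_log_lt one_lt_omega0 hb0).1 hb)
  obtain ⟨m, ham⟩ := exists_nat_lt_omega0_opow_mul (le_max_left (log ω a) (log ω b))
  obtain ⟨n, hbn⟩ := exists_nat_lt_omega0_opow_mul (le_max_right (log ω a) (log ω b))
  calc a ♯ b < ω ^ d * m ♯ ω ^ d * n :=
        (nadd_lt_nadd_right ham b).trans_le (nadd_le_nadd_left hbn.le _)
    _ = ω ^ d * (m + n : ℕ) := by rw [mul_nadd_mul_natCast (IH d hde), Nat.cast_add]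
    _ < ω ^ d * ω := mul_lt_mul_of_pos_left (natCast_lt_omega0 _) (opow_pos d omega0_pos)
    _ = ω ^ Order.succ d := (opow_succ _ _).symm
    _ ≤ ω ^ e := opow_le_opow_right omega0_pos (Order.succ_le_of_lt hde)

theorem support_add_eq_union {ι : Type*} [DecidableEq ι] (f g : ι →₀ Ordinal) :
    (f + g).support = f.support ∪ g.support := by
  ext i
  simp only [Finsupp.mem_support_iff, Finsupp.add_apply, Finset.mem_union, ne_eq,
    add_eq_zero_iff, not_and_or]

theorem coeff_omega0_opow_mul_add (m : ℕ) {d r : Ordinal} (hr : r < ω ^ d) :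
    CNF.coeff ω (ω ^ d * m + r) = Finsupp.single d (m : Ordinal) + CNF.coeff ω r := by
  rcases eq_or_ne m 0 with rfl | hm
  · simp
  · exact CNF.coeff_opow_mul_add one_lt_omega0 (Nat.cast_ne_zero.2 hm) (natCast_lt_omega0 m) hr

theorem support_coeff_omega0_opow (e : Ordinal) : (CNF.coeff ω (ω ^ e)).support = {e} := by
  simpa using congrArg Finsupp.support (coeff_omega0_opow_mul_add 1 (opow_pos e omega0_pos))

theorem le_of_mem_support_coeff {o e : Ordinal} (h : e ∈ (CNF.coeff ω o).support) : e ≤ o := by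
  rw [CNF.support_coeff, List.mem_toFinset, List.mem_map] at h
  obtain ⟨x, hx, rfl⟩ := h
  exact (CNF.fst_le_log hx).trans (log_le_self _ _)

theorem support_coeff_nadd (a b : Ordinal) :
    (CNF.coeff ω (a ♯ b)).support = (CNF.coeff ω a).support ∪ (CNF.coeff ω b).support := by
  rcases eq_or_ne (a ♯ b) 0 with h | h
  · obtain rfl : a = 0 := le_antisymm (h ▸ le_self_nadd a b) zero_le
    obtain rfl : b = 0 := le_antisymm (h ▸ le_nadd_self 0 b) zero_le
    simp
  set d := log ω (a ♯ b)
  have hlt : a ♯ b < ω ^ d * ω := opow_succ ω d ▸ lt_opow_succ_log_self one_lt_omega0 _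
  obtain ⟨m, a₀, ha₀, ha⟩ :=
    exists_nat_eq_mul_add_of_lt_mul_omega0 ((le_self_nadd a b).trans_lt hlt)
  obtain ⟨n, b₀, hb₀, hb⟩ :=
    exists_nat_eq_mul_add_of_lt_mul_omega0 ((le_nadd_self a b).trans_lt hlt)
  have hp := isPrincipal_nadd_omega0_opow d
  have hsum : a ♯ b = ω ^ d * (m + n : ℕ) + (a₀ ♯ b₀) := by
    rw [ha, hb, mul_add_nadd_mul_add hp _ _ ha₀ hb₀, Nat.cast_add]
  have hdec : a₀ ♯ b₀ < a ♯ b := (hp ha₀ hb₀).trans_le (opow_log_le_self ω h)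
  rw [hsum, coeff_omega0_opow_mul_add _ (hp ha₀ hb₀), support_add_eq_union,
    support_coeff_nadd a₀ b₀, ha, hb, coeff_omega0_opow_mul_add _ ha₀,
    coeff_omega0_opow_mul_add _ hb₀, Nat.cast_add, Finsupp.single_add,
    support_add_eq_union, support_add_eq_union,
    support_add_eq_union, Finset.union_union_union_comm]
termination_by a ♯ b

theorem support_coeff_add_subset (a b : Ordinal) :
    (CNF.coeff ω (a + b)).support ⊆ (CNF.coeff ω a).support ∪ (CNF.coeff ω b).support := by
  rcases eq_or_ne b 0 with rfl | hb
  · simp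
  set p := ω ^ log ω b
  have hp := isPrincipal_nadd_omega0_opow (log ω b)
  obtain ⟨q, r, hr, rfl⟩ : ∃ q r, r < p ∧ a = p * q + r :=
    ⟨_, _, mod_lt a (opow_pos _ omega0_pos).ne', (div_add_mod a p).symm⟩
  have hbp : b < p * ω := opow_succ ω _ ▸ lt_opow_succ_log_self one_lt_omega0 b
  -- the part `r` of `a` below the leading term of `b` is absorbed: `a + b = p * q ♯ b`
  rw [add_assoc, add_of_omega0_opow_le hr (opow_log_le_self ω hb),
    ← mul_nadd_of_lt_mul_omega0 hp q hbp, ← mul_nadd_of_lt hp q hr, support_coeff_nadd,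
    support_coeff_nadd]
  exact Finset.union_subset_union_left Finset.subset_union_left

theorem mem_of_forall_mem_support_coeff {Y : Set Ordinal} (h0 : 0 ∈ Y)
    (hadd : ∀ a ∈ Y, ∀ b ∈ Y, a + b ∈ Y) {o : Ordinal}
    (h : ∀ e ∈ (CNF.coeff ω o).support, ω ^ e ∈ Y) : o ∈ Y := by
  have hmul : ∀ x ∈ Y, ∀ n : ℕ, x * n ∈ Y := by
    intro x hx n
    induction n with
    | zero => simpa using h0
    | succ n ih => rw [Nat.cast_succ, mul_add_one]; exact hadd _ ih _ hx
  have hterms : ∀ t ∈ CNF ω o, t.2 < ω ∧ ω ^ t.1 ∈ Y := fun t ht =>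
    ⟨CNF.snd_lt one_lt_omega0 ht,
      h _ (by rw [CNF.support_coeff]; exact List.mem_toFinset.2 (List.mem_map_of_mem ht))⟩
  rw [← CNF.foldr ω o]
  generalize CNF ω o = l at hterms
  induction l with
  | nil => exact h0
  | cons t l ih =>
    obtain ⟨n, hn⟩ := lt_omega0.1 (hterms t List.mem_cons_self).1
    rw [List.foldr_cons, hn]
    exact hadd _ (hmul _ (hterms t List.mem_cons_self).2 n) _
      (ih fun t' ht' => hterms t' (List.mem_cons_of_mem _ ht'))

theorem omega0_opow_eq_self_of_forall_lt {p : Ordinal} (hp : p ≠ 0)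
    (h : ∀ x < p, ω ^ (x + 1) < p) : ω ^ p = p := by
  have hlim : Order.IsSuccLimit p := isSuccLimit_iff.2 ⟨hp, Order.isSuccPrelimit_of_succ_lt
    fun x hx => (right_le_opow (x + 1) one_lt_omega0).trans_lt (h x hx)⟩
  refine ((opow_le_of_isSuccLimit omega0_ne_zero hlim).2 fun x hx => ?_).antisymm
    (right_le_opow p one_lt_omega0)
  exact (opow_le_opow_right omega0_pos le_self_add).trans (h x hx).le

end Ordinal

section Hull

variable {α : Ordinal} {X : Set Ordinal}

theorem H_subset_of_closed {Y : Set Ordinal} (hX : X ⊆ Y) (h0 : 0 ∈ Y) (hI : I ∈ Y)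
    (hadd : ∀ γ ∈ Y, ∀ δ ∈ Y, γ + δ ∈ Y) (hopow : ∀ γ ∈ Y, ω ^ γ ∈ Y)
    (hOm : ∀ γ ∈ Y, Om γ ∈ Y)
    (hpsi : ∀ σ ∈ R, ∀ β ∈ Y, β < α → σ ∈ Y → psi σ β ∈ Y) : H α X ⊆ Y := by
  rw [H]
  exact sInter_subset_of_mem
    ⟨union_subset hX (insert_subset h0 (singleton_subset_iff.2 hI)), hadd, hopow, hOm, hpsi⟩

theorem subset_H : X ⊆ H α X := by
  rw [H]
  exact fun x hx Y hY => hY.1 (Or.inl hx)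

theorem zero_mem_H : (0 : Ordinal) ∈ H α X := by
  rw [H]
  exact fun Y hY => hY.1 (Or.inr (Or.inl rfl))

theorem I_mem_H : I ∈ H α X := by
  rw [H]
  exact fun Y hY => hY.1 (Or.inr (Or.inr rfl))

theorem add_mem_H {γ δ : Ordinal} (hγ : γ ∈ H α X) (hδ : δ ∈ H α X) : γ + δ ∈ H α X := by
  rw [H] at *
  exact fun Y hY => hY.2.1 γ (hγ Y hY) δ (hδ Y hY)

theorem opow_mem_H {γ : Ordinal} (hγ : γ ∈ H α X) : ω ^ γ ∈ H α X := by
  rw [H] at *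
  exact fun Y hY => hY.2.2.1 γ (hγ Y hY)

theorem Om_mem_H {γ : Ordinal} (hγ : γ ∈ H α X) : Om γ ∈ H α X := by
  rw [H] at *
  exact fun Y hY => hY.2.2.2.1 γ (hγ Y hY)

theorem psi_mem_H {σ β : Ordinal} (hσR : σ ∈ R) (hβ : β ∈ H α X) (hβα : β < α)
    (hσ : σ ∈ H α X) : psi σ β ∈ H α X := by
  rw [H] at *
  exact fun Y hY => hY.2.2.2.2 σ hσR β (hβ Y hY) hβα (hσ Y hY)

theorem one_mem_H : (1 : Ordinal) ∈ H α X := by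
  simpa using opow_mem_H (zero_mem_H (α := α) (X := X))

end Hull

section Omega

open Cardinal

theorem Om_zero : Om 0 = 0 := if_pos rfl

theorem Om_of_ne_zero {γ : Ordinal} (h : γ ≠ 0) : Om γ = ω_ γ := by
  rw [Om, if_neg h, ord_aleph]

theorem Om_strictMono : StrictMono Om := by
  intro γ δ h
  rw [Om_of_ne_zero (zero_le.trans_lt h).ne']
  rcases eq_or_ne γ 0 with rfl | hγ
  · rw [Om_zero]
    exact omega_pos δ
  · rw [Om_of_ne_zero hγ]
    exact omega_lt_omega.2 h

theorem le_Om_self (γ : Ordinal) : γ ≤ Om γ := Om_strictMono.le_apply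

theorem Om_eq_zero_iff {γ : Ordinal} : Om γ = 0 ↔ γ = 0 :=
  ⟨fun h => le_antisymm (h ▸ le_Om_self γ) zero_le, fun h => h ▸ Om_zero⟩

theorem isPrincipal_add_Om (γ : Ordinal) : IsPrincipal (· + ·) (Om γ) := by
  rcases eq_or_ne γ 0 with rfl | hγ
  · rw [Om_zero]
    exact isPrincipal_zero
  · rw [Om_of_ne_zero hγ]
    exact isPrincipal_add_omega γ

theorem omega0_opow_Om {γ : Ordinal} (h : γ ≠ 0) : ω ^ Om γ = Om γ := by
  rw [Om_of_ne_zero h]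
  exact op_eq_self_of_isPrincipal (omega_zero ▸ omega_lt_omega.2 (pos_iff_ne_zero.2 h))
    (isNormal_opow one_lt_omega0) (isPrincipal_opow_omega γ) (isSuccLimit_omega γ)

theorem WeaklyInaccessible.omega_ord {κ : Cardinal} (h : WeaklyInaccessible κ) :
    ω_ κ.ord = κ.ord := by
  obtain ⟨o, rfl⟩ := mem_range_aleph_iff.2 h.1.le
  have ho : Order.IsSuccLimit o := by
    rcases zero_or_succ_or_isSuccLimit o with rfl | ⟨a, rfl⟩ | ho
    · exact absurd h.1 (by simp)
    · have := h.2.2 (ℵ_ a) (aleph_lt_aleph.2 (Order.lt_succ a))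
      rw [Order.succ_eq_add_one, ← succ_aleph] at this
      exact absurd this (lt_irrefl _)
    · exact ho
  have hcof : ℵ_ o ≤ o.cof :=
    not_lt.1 fun hlt => h.2.1.not_isSingular (isSingular_aleph_iff.2 ⟨ho, hlt⟩)
  have heq : ω_ o = o :=
    (ord_aleph o ▸ ord_le.2 (hcof.trans (cof_le_card o))).antisymm (le_omega_self o)
  rw [ord_aleph]
  exact congrArg omega heq

theorem weaklyInaccessible_sInf (hex : ∃ c : Cardinal.{u}, WeaklyInaccessible c) :
    WeaklyInaccessible (sInf {c : Cardinal.{u} | WeaklyInaccessible c}) :=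
  csInf_mem hex

theorem Om_I : Om I.{u} = I.{u} := by
  by_cases hex : ∃ c : Cardinal.{u}, WeaklyInaccessible c
  · have hκ := weaklyInaccessible_sInf hex
    have hI : I.{u} ≠ 0 := by
      rw [I, Ne, ord_eq_zero]
      exact (aleph0_pos.trans hκ.1).ne'
    rw [Om_of_ne_zero hI, I, hκ.omega_ord]
  · -- `I` is then the junk value `(sInf ∅).ord = 0`
    have : {c : Cardinal.{u} | WeaklyInaccessible c} = ∅ :=
      eq_empty_of_forall_notMem fun c hc => hex ⟨c, hc⟩
    rw [I, this, Cardinal.sInf_empty, ord_zero, Om_zero]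

theorem omega0_opow_eq_self_of_mem_R {σ : Ordinal} (hσ : σ ∈ R) (hσ0 : σ ≠ 0) : ω ^ σ = σ := by
  rcases hσ with ⟨μ, -, rfl⟩ | rfl
  · exact omega0_opow_Om (by simp)
  · have := omega0_opow_Om hσ0
    rwa [Om_I] at this

end Omega

section Collapse

theorem psi_le (σ β : Ordinal) : psi σ β ≤ σ :=
  csInf_le' (Or.inr rfl)

theorem H_inter_Iio_subset_of_psi_lt {σ β : Ordinal} (h : psi σ β < σ) :
    H β (Iio (psi σ β)) ∩ Iio σ ⊆ Iio (psi σ β) := by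
  rcases csInf_mem (s := {γ | γ < σ ∧ σ ∈ H β (Iio γ) ∧ H β (Iio γ) ∩ Iio σ ⊆ Iio γ} ∪ {σ})
    ⟨σ, Or.inr rfl⟩ with h' | h'
  · exact h'.2.2
  · exact absurd h' h.ne

theorem eq_of_Om_eq_psi {σ β g : Ordinal} (h : psi σ β < σ) (hg : Om g = psi σ β) :
    g = psi σ β :=
  ((le_Om_self g).trans_eq hg).eq_of_not_lt fun hg' =>
    (H_inter_Iio_subset_of_psi_lt h ⟨Om_mem_H (subset_H hg'), hg ▸ h⟩).ne hg

theorem omega0_opow_psi {σ β : Ordinal} (hσ : ω ^ σ = σ) (h : psi σ β < σ) (h0 : psi σ β ≠ 0) :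
    ω ^ psi σ β = psi σ β := by
  have hσadd : IsPrincipal (· + ·) σ := hσ ▸ isPrincipal_add_omega0_opow σ
  refine omega0_opow_eq_self_of_forall_lt h0 fun x hx => H_inter_Iio_subset_of_psi_lt h ⟨?_, ?_⟩
  · exact opow_mem_H (add_mem_H (subset_H hx) one_mem_H)
  · rw [mem_Iio, ← hσ, opow_lt_opow_iff_right one_lt_omega0]
    exact hσadd (hx.trans h) ((Order.one_le_iff_ne_zero.2 h0).trans_lt h)

end Collapse

section Decomposable

def HDecomp (α : Ordinal) (X : Set Ordinal) : Set Ordinal :=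
  {δ | δ ∈ H α X ∧ (∀ e ∈ (CNF.coeff ω δ).support, e ∈ H α X) ∧ ∀ γ, Om γ = δ → γ ∈ H α X}

variable {α : Ordinal} {X : Set Ordinal}

theorem zero_mem_HDecomp : (0 : Ordinal) ∈ HDecomp α X :=
  ⟨zero_mem_H, by simp, fun γ hγ => Om_eq_zero_iff.1 hγ ▸ zero_mem_H⟩

theorem mem_HDecomp_of_opow_eq_self {p : Ordinal} (hp : p ∈ H α X) (heps : ω ^ p = p)
    (hOm : ∀ γ, Om γ = p → γ ∈ H α X) : p ∈ HDecomp α X := by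
  refine ⟨hp, fun e he => ?_, hOm⟩
  rw [← heps, support_coeff_omega0_opow, Finset.mem_singleton] at he
  exact he ▸ hp

theorem add_mem_HDecomp {γ δ : Ordinal} (hγ : γ ∈ HDecomp α X) (hδ : δ ∈ HDecomp α X) :
    γ + δ ∈ HDecomp α X := by
  obtain ⟨hγ, hγe, hγΩ⟩ := hγ
  obtain ⟨hδ, hδe, hδΩ⟩ := hδ
  refine ⟨add_mem_H hγ hδ, fun e he => ?_, fun g hg => ?_⟩
  · rcases Finset.mem_union.1 (support_coeff_add_subset γ δ he) with h | h
    exacts [hγe e h, hδe e h]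
  · rcases (le_self_add : γ ≤ γ + δ).lt_or_eq with hγlt | hγeq
    · rcases (le_add_self : δ ≤ γ + δ).lt_or_eq with hδlt | hδeq
      · exact absurd hg (isPrincipal_add_Om g (hg ▸ hγlt) (hg ▸ hδlt)).ne'
      · exact hδΩ g (hg.trans hδeq.symm)
    · exact hγΩ g (hg.trans hγeq.symm)

theorem opow_mem_HDecomp {γ : Ordinal} (hγ : γ ∈ HDecomp α X) : ω ^ γ ∈ HDecomp α X := by
  obtain ⟨hγ, -, hγΩ⟩ := hγ
  refine ⟨opow_mem_H hγ, fun e he => ?_, fun g hg => ?_⟩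
  · rw [support_coeff_omega0_opow, Finset.mem_singleton] at he
    exact he ▸ hγ
  · rcases eq_or_ne g 0 with rfl | hg0
    · exact zero_mem_H
    · exact hγΩ g ((opow_right_inj one_lt_omega0).1 ((omega0_opow_Om hg0).trans hg))

theorem Om_mem_HDecomp {γ : Ordinal} (hγ : γ ∈ HDecomp α X) : Om γ ∈ HDecomp α X := by
  rcases eq_or_ne γ 0 with rfl | hγ0
  · rw [Om_zero]
    exact zero_mem_HDecomp
  · exact mem_HDecomp_of_opow_eq_self (Om_mem_H hγ.1) (omega0_opow_Om hγ0)
      fun g hg => Om_strictMono.injective hg ▸ hγ.1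

theorem psi_mem_HDecomp {σ β : Ordinal} (hσR : σ ∈ R) (hβ : β ∈ H α X) (hβα : β < α)
    (hσ : σ ∈ HDecomp α X) : psi σ β ∈ HDecomp α X := by
  rcases (psi_le σ β).lt_or_eq with hlt | heq
  · have hp : psi σ β ∈ H α X := psi_mem_H hσR hβ hβα hσ.1
    rcases eq_or_ne (psi σ β) 0 with h0 | h0
    · rw [h0]
      exact zero_mem_HDecomp
    exact mem_HDecomp_of_opow_eq_self hp
      (omega0_opow_psi (omega0_opow_eq_self_of_mem_R hσR (zero_le.trans_lt hlt).ne') hlt h0)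
      fun g hg => eq_of_Om_eq_psi hlt hg ▸ hp
  · rw [heq]
    exact hσ

theorem H_subset_HDecomp (hX : IsLowerSet X) : H α X ⊆ HDecomp α X := by
  refine H_subset_of_closed (fun x hx => ⟨subset_H hx, fun e he => ?_, fun γ hγ => ?_⟩)
    zero_mem_HDecomp ?_ (fun γ hγ δ hδ => add_mem_HDecomp hγ hδ) (fun γ => opow_mem_HDecomp)
    (fun γ => Om_mem_HDecomp) fun σ hσR β hβ hβα hσ => psi_mem_HDecomp hσR hβ.1 hβα hσ
  · exact subset_H (hX (le_of_mem_support_coeff he) hx)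
  · exact subset_H (hX (hγ ▸ le_Om_self γ) hx)
  · rcases eq_or_ne I 0 with hI | hI
    · rw [hI]
      exact zero_mem_HDecomp
    · exact mem_HDecomp_of_opow_eq_self I_mem_H (omega0_opow_eq_self_of_mem_R (Or.inr rfl) hI)
        fun γ hγ => Om_strictMono.injective (hγ.trans Om_I.symm) ▸ I_mem_H

theorem mem_H_iff_forall_mem_support_coeff (hX : IsLowerSet X) {o : Ordinal} :
    o ∈ H α X ↔ ∀ e ∈ (CNF.coeff ω o).support, e ∈ H α X :=
  ⟨fun h => (H_subset_HDecomp hX h).2.1, fun h => mem_of_forall_mem_support_coeff zero_mem_H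
    (fun _ ha _ hb => add_mem_H ha hb) fun e he => opow_mem_H (h e he)⟩

end Decomposable

theorem stmt4_general (α β : Ordinal) :
    (∀ γ ∈ H α (Set.Iio β), ∀ δ ∈ H α (Set.Iio β), γ ♯ δ ∈ H α (Set.Iio β)) ∧
    (∀ γ δ : Ordinal, γ ♯ δ ∈ H α (Set.Iio β) →
      γ ∈ H α (Set.Iio β) ∧ δ ∈ H α (Set.Iio β)) ∧
    (∀ γ : Ordinal, Ordinal.omega0 ^ γ ∈ H α (Set.Iio β) → γ ∈ H α (Set.Iio β)) ∧
    (∀ γ : Ordinal, Om γ ∈ H α (Set.Iio β) → γ ∈ H α (Set.Iio β)) := by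
  have hX := isLowerSet_Iio β
  have key := fun o => mem_H_iff_forall_mem_support_coeff hX (α := α) (o := o)
  refine ⟨fun γ hγ δ hδ => ?_, fun γ δ h => ?_, fun γ h => ?_, fun γ h => ?_⟩
  · rw [key, support_coeff_nadd]
    rw [key] at hγ hδ
    intro e he
    rcases Finset.mem_union.1 he with h | h
    exacts [hγ e h, hδ e h]
  · rw [key, support_coeff_nadd] at h
    rw [key, key]
    exact ⟨fun e he => h e (Finset.mem_union_left _ he),
      fun e he => h e (Finset.mem_union_right _ he)⟩
  · rw [key, support_coeff_omega0_opow] at h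
    exact h γ (Finset.mem_singleton_self γ)
  · exact (H_subset_HDecomp hX h).2.2 γ rfl

theorem stmt4 (hex : ∃ c : Cardinal, WeaklyInaccessible c) (α β : Ordinal) :
    (∀ γ ∈ H α (Set.Iio β), ∀ δ ∈ H α (Set.Iio β), γ ♯ δ ∈ H α (Set.Iio β)) ∧
    (∀ γ δ : Ordinal, γ ♯ δ ∈ H α (Set.Iio β) →
      γ ∈ H α (Set.Iio β) ∧ δ ∈ H α (Set.Iio β)) ∧
    (∀ γ : Ordinal, Ordinal.omega0 ^ γ ∈ H α (Set.Iio β) → γ ∈ H α (Set.Iio β)) ∧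
    (∀ γ : Ordinal, Om γ ∈ H α (Set.Iio β) → γ ∈ H α (Set.Iio β)) :=
  stmt4_general α β
end
end

section
/- Define iterated exponentials by ω_0(α) = α and ω_{m+1}(α) = ω^{ω_m(α)} for m < ω. For every natural number m and all ordinals δ₀, δ₁, η: if δ₀ ≪ δ₁ {η} then ω_m(δ₀) ≪ ω_m(δ₁) {η}. -/
open Ordinal Set

noncomputable section

/-- Iterated exponentials: `ω_0(α) = α`, `ω_{m+1}(α) = ω^{ω_m(α)}`. -/
def omIter : ℕ → Ordinal → Ordinal
  | 0, α => α
  | m + 1, α => Ordinal.omega0 ^ (omIter m α)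

/-
Proof idea: the hulls `H α β` are closed under taking logarithms to base `ω`: if `ω ^ γ` lies in
`H α β` then so does `γ`. Indeed the set of members of `H α β` all of whose `ω`-logarithms lie in
`H α β` satisfies the closure conditions of the hull: a sum `a + b = ω ^ γ` has `a = ω ^ γ` or
`b = ω ^ γ` since `ω ^ γ` is additively principal, and every other generator — an ordinal `< β`,
`0`, `I`, `Ω_μ`, `ψ_σ ν` — is either below `β`, or `0`, or a fixed point of `ω ^ ·`. Hence if
`ω ^ δ₁` and `η` lie in `H α (ψ_σ α)`, so does `δ₁`, hence `δ₀`, hence `ω ^ δ₀`; induct on `m`.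
-/

structure IsHClosed (α : Ordinal) (X Y : Set Ordinal) : Prop where
  subset : X ∪ {0, I} ⊆ Y
  add_mem : ∀ γ ∈ Y, ∀ δ ∈ Y, γ + δ ∈ Y
  omega0_opow_mem : ∀ γ ∈ Y, ω ^ γ ∈ Y
  Om_mem : ∀ γ ∈ Y, Om γ ∈ Y
  psiOf_mem : ∀ σ ∈ R, ∀ β ∈ Y, β < α → σ ∈ Y → psiOf (H β) σ ∈ Y

lemma H_eq_sInter (α : Ordinal) (X : Set Ordinal) : H α X = ⋂₀ {Y | IsHClosed α X Y} := by
  rw [H]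
  congr
  ext Y
  exact ⟨fun ⟨h₁, h₂, h₃, h₄, h₅⟩ ↦ ⟨h₁, h₂, h₃, h₄, h₅⟩, fun ⟨h₁, h₂, h₃, h₄, h₅⟩ ↦ ⟨h₁, h₂, h₃, h₄, h₅⟩⟩

lemma isHClosed_H (α : Ordinal) (X : Set Ordinal) : IsHClosed α X (H α X) := by
  rw [H_eq_sInter]
  exact
    { subset := fun x hx Y hY ↦ hY.subset hx
      add_mem := fun γ hγ δ hδ Y hY ↦ hY.add_mem γ (hγ Y hY) δ (hδ Y hY)
      omega0_opow_mem := fun γ hγ Y hY ↦ hY.omega0_opow_mem γ (hγ Y hY)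
      Om_mem := fun γ hγ Y hY ↦ hY.Om_mem γ (hγ Y hY)
      psiOf_mem := fun σ hσ β hβ hβα hσY Y hY ↦
        hY.psiOf_mem σ hσ β (hβ Y hY) hβα (hσY Y hY) }

lemma H_subset_of_isHClosed {α : Ordinal} {X Y : Set Ordinal} (hY : IsHClosed α X Y) :
    H α X ⊆ Y := by
  rw [H_eq_sInter]
  exact sInter_subset_of_mem hY

lemma omega0_opow_mem_H {α γ : Ordinal} {X : Set Ordinal} (h : γ ∈ H α X) : ω ^ γ ∈ H α X :=
  (isHClosed_H α X).omega0_opow_mem γ h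

lemma eq_ord_of_omega0_opow_eq {c : Cardinal} (hc : Cardinal.aleph0 < c) {γ : Ordinal}
    (h : ω ^ γ = c.ord) : γ = c.ord := by
  refine ((right_le_opow γ one_lt_omega0).trans_eq h).antisymm (not_lt.1 fun hγ ↦ ?_)
  exact (isPrincipal_opow_ord hc.le (Cardinal.omega0_lt_ord.2 hc) hγ).ne h

lemma eq_Om_of_omega0_opow_eq {β γ : Ordinal} (h : ω ^ γ = Om β) : γ = Om β := by
  rw [Om] at h ⊢
  split_ifs at h ⊢ with hβ
  · exact absurd h (opow_ne_zero γ omega0_ne_zero)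
  · refine eq_ord_of_omega0_opow_eq ?_ h
    simpa using Cardinal.aleph_lt_aleph.2 (pos_iff_ne_zero.2 hβ)

lemma eq_I_of_omega0_opow_eq {γ : Ordinal} (h : ω ^ γ = I) : γ = I := by
  rw [I] at h ⊢
  rcases eq_empty_or_nonempty {c : Cardinal | WeaklyInaccessible c} with hS | hS
  · rw [hS, Cardinal.sInf_empty, Cardinal.ord_zero] at h
    exact absurd h (opow_ne_zero γ omega0_ne_zero)
  · exact eq_ord_of_omega0_opow_eq (csInf_mem hS).1 h

lemma eq_of_omega0_opow_eq_of_mem_R {σ γ : Ordinal} (hσ : σ ∈ R) (h : ω ^ γ = σ) : γ = σ := by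
  rcases hσ with ⟨μ, -, rfl⟩ | rfl
  · exact eq_Om_of_omega0_opow_eq h
  · exact eq_I_of_omega0_opow_eq h

lemma eq_psi_of_omega0_opow_eq {σ β γ : Ordinal} (hσ : σ ∈ R) (h : ω ^ γ = psi σ β) :
    γ = psi σ β := by
  have hψ : psi σ β ∈ {b | b < σ ∧ σ ∈ H β (Iio b) ∧ H β (Iio b) ∩ Iio σ ⊆ Iio b} ∪ {σ} :=
    csInf_mem ⟨σ, Or.inr rfl⟩
  rcases hψ with ⟨hψσ, -, hψ_trap⟩ | hψσ
  · refine ((right_le_opow γ one_lt_omega0).trans_eq h).eq_or_lt.resolve_right fun hγ ↦ ?_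
    -- `γ < ψ` puts `ω ^ γ = ψ` into `H β (Iio ψ) ∩ Iio σ`, which lies below `ψ`.
    have hmem : ω ^ γ ∈ H β (Iio (psi σ β)) ∩ Iio σ :=
      ⟨omega0_opow_mem_H ((isHClosed_H β _).subset (Or.inl hγ)), h ▸ hψσ⟩
    exact (hψ_trap hmem).ne h
  · rw [mem_singleton_iff] at hψσ
    rw [hψσ] at h ⊢
    exact eq_of_omega0_opow_eq_of_mem_R hσ h

lemma eq_or_eq_of_add_eq_omega0_opow {a b γ : Ordinal} (h : a + b = ω ^ γ) :
    a = ω ^ γ ∨ b = ω ^ γ := by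
  by_contra! hne
  exact isPrincipal_add_iff_add_lt_ne_self.1 (isPrincipal_add_omega0_opow γ)
    a ((h ▸ le_self_add).lt_of_ne hne.1) b ((h ▸ le_add_self).lt_of_ne hne.2) h

lemma mem_H_of_omega0_opow_mem {α t γ : Ordinal} (h : ω ^ γ ∈ H α (Iio t)) :
    γ ∈ H α (Iio t) := by
  set Y := H α (Iio t)
  have hY : IsHClosed α (Iio t) Y := isHClosed_H α _
  let Y' : Set Ordinal := {β | β ∈ Y ∧ ∀ γ, ω ^ γ = β → γ ∈ Y}
  suffices hY' : IsHClosed α (Iio t) Y' from (H_subset_of_isHClosed hY' h).2 γ rfl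
  refine ⟨?_, ?_, ?_, ?_, ?_⟩
  · rintro x (hx | rfl | rfl)
    · refine ⟨hY.subset (Or.inl hx), fun γ hγ ↦ hY.subset (Or.inl ?_)⟩
      exact ((right_le_opow γ one_lt_omega0).trans_eq hγ).trans_lt hx
    · exact ⟨hY.subset (by simp), fun γ hγ ↦ absurd hγ (opow_ne_zero γ omega0_ne_zero)⟩
    · refine ⟨hY.subset (by simp), fun γ hγ ↦ ?_⟩
      rw [eq_I_of_omega0_opow_eq hγ]
      exact hY.subset (by simp)
  · rintro a ⟨ha, ha'⟩ b ⟨hb, hb'⟩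
    refine ⟨hY.add_mem a ha b hb, fun γ hγ ↦ ?_⟩
    rcases eq_or_eq_of_add_eq_omega0_opow hγ.symm with rfl | rfl
    exacts [ha' γ rfl, hb' γ rfl]
  · rintro β ⟨hβ, -⟩
    exact ⟨hY.omega0_opow_mem β hβ, fun γ hγ ↦ (opow_right_inj one_lt_omega0).1 hγ ▸ hβ⟩
  · rintro β ⟨hβ, -⟩
    refine ⟨hY.Om_mem β hβ, fun γ hγ ↦ ?_⟩
    rw [eq_Om_of_omega0_opow_eq hγ]
    exact hY.Om_mem β hβ
  · rintro σ hσ β ⟨hβ, -⟩ hβα ⟨hσY, -⟩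
    have hψ : psi σ β ∈ Y := hY.psiOf_mem σ hσ β hβ hβα hσY
    refine ⟨hψ, fun γ hγ ↦ ?_⟩
    rw [eq_psi_of_omega0_opow_eq hσ hγ]
    exact hψ

lemma llr.omega0_opow {η δ₀ δ₁ : Ordinal} (h : llr η δ₀ δ₁) : llr η (ω ^ δ₀) (ω ^ δ₁) :=
  ⟨(opow_lt_opow_iff_right one_lt_omega0).2 h.1, fun σ hσ α hδ₁ hη ↦
    omega0_opow_mem_H (h.2 σ hσ α (mem_H_of_omega0_opow_mem hδ₁) hη)⟩

theorem stmt17_general (m : ℕ) (δ₀ δ₁ η : Ordinal) (h : llr η δ₀ δ₁) :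
    llr η (omIter m δ₀) (omIter m δ₁) := by
  induction m with
  | zero => exact h
  | succ m ih => exact ih.omega0_opow

theorem stmt17 (hex : ∃ c : Cardinal, WeaklyInaccessible c)
    (m : ℕ) (δ₀ δ₁ η : Ordinal) (h : llr η δ₀ δ₁) :
    llr η (omIter m δ₀) (omIter m δ₁) :=
  stmt17_general m δ₀ δ₁ η h

end
end
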